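/- Let q ∈ ℂ with qⁿ ≠ 1 for all n ≥ 1, and let ψₙ = (qⁿ − 1)/(q − 1). Then for all 0 ≤ k ≤ n and all m ≥ l ≥ 0, the binomial-operator kernel satisfies C(n,k)(m,l) = q^{kl} · binomψ(n,k), where binomψ(n,k) is the Gaussian q-binomial coefficient; equivalently, the binomial operator ⟨n k⟩∗ applied to (f, g) equals binomψ(n,k)·f(q^k x)·g(x). -/

import Mathlib

open Finset

/-- The ψ-factorial: ψₙ! = ψ₁ψ₂⋯ψₙ, with ψ₀! = 1. -/
noncomputable def psiFact (ψ : ℕ → ℂ) : ℕ → ℂ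
  | 0 => 1
  | n + 1 => psiFact ψ n * ψ (n + 1)

/-- The ψ-binomial coefficient binomψ(n,k) = ψₙ!/(ψₖ!·ψ_{n−k}!). -/
noncomputable def psiBinom (ψ : ℕ → ℂ) (n k : ℕ) : ℂ :=
  psiFact ψ n / (psiFact ψ k * psiFact ψ (n - k))

/-- The Fontané numbers F(n,k) = (ψₙ − ψₖ)/ψ_{n−k}. -/
noncomputable def Fker (ψ : ℕ → ℂ) (n k : ℕ) : ℂ :=
  (ψ n - ψ k) / ψ (n - k)

/-- The q-integers [n] = (qⁿ − 1)/(q − 1). -/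
noncomputable def qInt (q : ℂ) (n : ℕ) : ℂ := (q ^ n - 1) / (q - 1)

/-- The binomial-operator kernels C(n,k)(m,l) of the binomial operators ⟨n k⟩∗. -/
noncomputable def Cker (ψ : ℕ → ℂ) : ℕ → ℕ → ℕ → ℕ → ℂ
  | _, 0, _, _ => 1
  | 0, _ + 1, _, _ => 0
  | n + 1, k + 1, m, l =>
      if k = n then ∏ i ∈ Finset.range (n + 1), Fker ψ (m + i + 1) l
      else Cker ψ n (k + 1) (m + 1) (l + 1) + Fker ψ (m + 1) l * Cker ψ n k (m + 1) l

/-!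
Since `[a + b] = q^a [b] + [a]`, every Fontané number `F(n, l)` with `l < n` equals `q^l`.
The recursion for `C(n,k)(m,l)` then becomes the q-Pascal rule
`binomψ(n+1, k+1) = q^(k+1) binomψ(n, k+1) + binomψ(n, k)`, multiplied by `q^((k+1)l)`,
and the diagonal kernel is a product of `n` copies of `q^l`.
-/

section PsiBinom

variable {ψ : ℕ → ℂ}

lemma psiFact_ne_zero (hψ : ∀ n, ψ (n + 1) ≠ 0) : ∀ n, psiFact ψ n ≠ 0
  | 0 => one_ne_zero
  | n + 1 => mul_ne_zero (psiFact_ne_zero hψ n) (hψ n)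

lemma psiBinom_zero_right (hψ : ∀ n, ψ (n + 1) ≠ 0) (n : ℕ) : psiBinom ψ n 0 = 1 := by
  rw [psiBinom, Nat.sub_zero, psiFact, one_mul, div_self (psiFact_ne_zero hψ n)]

lemma psiBinom_self (hψ : ∀ n, ψ (n + 1) ≠ 0) (n : ℕ) : psiBinom ψ n n = 1 := by
  rw [psiBinom, Nat.sub_self, psiFact, mul_one, div_self (psiFact_ne_zero hψ n)]

end PsiBinom

section QInt

variable {q : ℂ}

lemma qInt_add (hq : q ≠ 1) (a b : ℕ) : qInt q (a + b) = q ^ a * qInt q b + qInt q a := by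
  have : q - 1 ≠ 0 := sub_ne_zero.mpr hq
  simp only [qInt]
  field_simp
  ring

lemma qInt_succ_ne_zero (hq : ∀ n : ℕ, 1 ≤ n → q ^ n ≠ 1) (n : ℕ) : qInt q (n + 1) ≠ 0 :=
  div_ne_zero (sub_ne_zero.mpr (hq _ n.succ_pos)) (sub_ne_zero.mpr (by simpa using hq 1 le_rfl))

lemma Fker_qInt_of_lt (hq : ∀ n : ℕ, 1 ≤ n → q ^ n ≠ 1) {n l : ℕ} (h : l < n) :
    Fker (qInt q) n l = q ^ l := by
  obtain ⟨j, rfl⟩ : ∃ j, n = l + (j + 1) := ⟨n - l - 1, by omega⟩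
  rw [Fker, Nat.add_sub_cancel_left, qInt_add (by simpa using hq 1 le_rfl), add_sub_cancel_right,
    mul_div_cancel_right₀ _ (qInt_succ_ne_zero hq j)]

lemma qBinom_succ_succ (hq : ∀ n : ℕ, 1 ≤ n → q ^ n ≠ 1) {n k : ℕ} (hk : k < n) :
    psiBinom (qInt q) (n + 1) (k + 1)
      = q ^ (k + 1) * psiBinom (qInt q) n (k + 1) + psiBinom (qInt q) n k := by
  obtain ⟨j, rfl⟩ : ∃ j, n = k + j + 1 := ⟨n - k - 1, by omega⟩
  have hsum : qInt q (k + j + 1 + 1) = q ^ (k + 1) * qInt q (j + 1) + qInt q (k + 1) := by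
    rw [← qInt_add (by simpa using hq 1 le_rfl)]
    ring_nf
  rw [psiBinom, psiBinom, psiBinom, show k + j + 1 + 1 - (k + 1) = j + 1 by omega,
    show k + j + 1 - (k + 1) = j by omega, show k + j + 1 - k = j + 1 by omega]
  simp only [psiFact, hsum]
  have := psiFact_ne_zero (qInt_succ_ne_zero hq)
  have := qInt_succ_ne_zero hq k
  have := qInt_succ_ne_zero hq j
  field_simp

lemma Cker_qInt_self (hq : ∀ n : ℕ, 1 ≤ n → q ^ n ≠ 1) (n : ℕ) {m l : ℕ} (hlm : l ≤ m) :
    Cker (qInt q) n n m l = q ^ (n * l) := by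
  cases n with
  | zero => simp [Cker]
  | succ n =>
    rw [Cker, if_pos rfl, prod_congr rfl fun i _ => Fker_qInt_of_lt hq (by omega : l < m + i + 1),
      prod_const, card_range, ← pow_mul, mul_comm]

end QInt

/-- In the q-case the binomial-operator kernel is C(n,k)(m,l) = q^{kl}·binomψ(n,k),
i.e. ⟨n k⟩∗ applied to (f,g) equals the Gaussian binomial times f(qᵏx)g(x). -/
theorem qInt_Cker (q : ℂ) (hq : ∀ n : ℕ, 1 ≤ n → q ^ n ≠ 1)
    (n k : ℕ) (hkn : k ≤ n) (m l : ℕ) (hlm : l ≤ m) :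
    Cker (qInt q) n k m l = q ^ (k * l) * psiBinom (qInt q) n k := by
  have hψ := qInt_succ_ne_zero hq
  induction n generalizing k m l with
  | zero =>
    obtain rfl : k = 0 := by omega
    simp [Cker, psiBinom_zero_right hψ]
  | succ n ih =>
    rcases k with _ | k
    · simp [Cker, psiBinom_zero_right hψ]
    rcases (Nat.lt_succ_iff.mp hkn).lt_or_eq with hk | rfl
    · rw [Cker, if_neg hk.ne, ih (k + 1) hk (m + 1) (l + 1) (by omega),
        ih k hk.le (m + 1) l (by omega),
        Fker_qInt_of_lt hq (by omega), qBinom_succ_succ hq hk]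
      ring
    · rw [Cker_qInt_self hq _ hlm, psiBinom_self hψ, mul_one]
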